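/- In the real space X = ℓ∞², for δ ∈ (0,2) and μ,θ ∈ [0,1] with μθ > 1-δ and Ψ(μ,θ,δ) ≤ min{1+μ,1+θ}, the pair x = (μ, 1-Ψ(μ,θ,δ)), x* = (θ(1-k), θk) with k = (θ-μ+√((μ-θ)²+8(μθ-1+δ)))/(4θ) satisfies ‖x‖_∞ = μ, ‖x*‖_1 = θ, x*(x) = 1-δ, and d_∞((x,x*),Π(X)) ≥ Ψ(μ,θ,δ). -/
import Mathlib


/-- The function Ψ(μ,θ,δ) from the paper. -/
noncomputable def Psi (μ θ δ : ℝ) : ℝ :=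
  (2 - μ - θ + Real.sqrt ((μ - θ)^2 + 8 * (μ * θ - 1 + δ))) / 2

/-- Π(ℓ∞²): pairs ((a,b),(c,d)) with max(|a|,|b|)=1, |c|+|d|=1 and ac+bd=1, where the
space is ℝ² with the sup norm and the dual is ℝ² with the ℓ¹ norm. -/
def PiLinf : Set ((ℝ × ℝ) × (ℝ × ℝ)) :=
  {p | max |p.1.1| |p.1.2| = 1 ∧ |p.2.1| + |p.2.2| = 1 ∧ p.1.1 * p.2.1 + p.1.2 * p.2.2 = 1}

/-- The d_∞ distance from a pair (x, x*) to Π(ℓ∞²). -/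
noncomputable def dInfLinf (x xs : ℝ × ℝ) : ℝ :=
  sInf {r : ℝ | ∃ p ∈ PiLinf,
    r = max (max |x.1 - p.1.1| |x.2 - p.1.2|) (|xs.1 - p.2.1| + |xs.2 - p.2.2|)}

theorem linf_sharp_example (δ μ θ : ℝ) (hδ : δ ∈ Set.Ioo (0:ℝ) 2)
    (hμ : μ ∈ Set.Icc (0:ℝ) 1) (hθ : θ ∈ Set.Icc (0:ℝ) 1) (h : μ * θ > 1 - δ)
    (hPsi : Psi μ θ δ ≤ min (1 + μ) (1 + θ)) :
    ∀ k : ℝ, k = (θ - μ + Real.sqrt ((μ - θ)^2 + 8 * (μ * θ - 1 + δ))) / (4 * θ) →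
    ∀ x xs : ℝ × ℝ, x = (μ, 1 - Psi μ θ δ) → xs = (θ * (1 - k), θ * k) →
      max |x.1| |x.2| = μ ∧ |xs.1| + |xs.2| = θ ∧
      xs.1 * x.1 + xs.2 * x.2 = 1 - δ ∧
      dInfLinf x xs ≥ Psi μ θ δ := by
  obtain ⟨hδ0, hδ2⟩ := hδ
  obtain ⟨hμ0, hμ1⟩ := hμ
  obtain ⟨hθ0, hθ1⟩ := hθ
  intro k hk x xs hx hxs
  subst hx hxs
  have hrad_pos : 0 < (μ - θ)^2 + 8 * (μ * θ - 1 + δ) := by nlinarith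
  set R := Real.sqrt ((μ - θ)^2 + 8 * (μ * θ - 1 + δ)) with hRdef
  have hR2 : R^2 = (μ - θ)^2 + 8 * (μ * θ - 1 + δ) := Real.sq_sqrt hrad_pos.le
  have hRpos : 0 < R := Real.sqrt_pos.mpr hrad_pos
  have hRgt : |μ - θ| < R := by
    rw [← Real.sqrt_sq_eq_abs]
    exact Real.sqrt_lt_sqrt (sq_nonneg _) (by nlinarith)
  rw [abs_lt] at hRgt
  obtain ⟨hRg1, hRg2⟩ := hRgt
  have hPsidef : Psi μ θ δ = (2 - μ - θ + R) / 2 := by rw [hRdef]; rfl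
  have hPsiu : Psi μ θ δ ≤ 1 + μ := hPsi.trans (min_le_left _ _)
  have hRle : R ≤ μ + 3 * θ := by
    have h2 := hPsi.trans (min_le_right _ _)
    rw [hPsidef] at h2; linarith
  have hPsil : 1 - μ ≤ Psi μ θ δ := by rw [hPsidef]; linarith
  have hPsit : Psi μ θ δ ≤ 1 + θ := hPsi.trans (min_le_right _ _)
  have hθpos : 0 < θ := by
    rcases lt_or_eq_of_le hθ0 with h' | h'
    · exact h'
    · exfalso; nlinarith
  have hθk : θ * k = (θ - μ + R) / 4 := by
    rw [hk]; field_simp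
  have hkpos : 0 < k := by
    rw [hk]; exact div_pos (by linarith) (by linarith)
  have hk1 : k ≤ 1 := by
    rw [hk, div_le_one (by linarith)]; linarith
  have hkk : θ * (1 - k) = θ - θ * k := by ring
  have h1k : 0 ≤ θ * (1 - k) := mul_nonneg hθpos.le (by linarith)
  have h2k : 0 ≤ θ * k := mul_nonneg hθpos.le hkpos.le
  refine ⟨?_, ?_, ?_, ?_⟩
  · show max |μ| |1 - Psi μ θ δ| = μ
    rw [abs_of_nonneg hμ0, max_eq_left (abs_le.mpr ⟨by linarith, by linarith⟩)]
  · show |θ * (1 - k)| + |θ * k| = θ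
    rw [abs_of_nonneg h1k, abs_of_nonneg h2k]; ring
  · show θ * (1 - k) * μ + θ * k * (1 - Psi μ θ δ) = 1 - δ
    rw [hPsidef]
    have h4 : 4 * (θ * k) = θ - μ + R := by linarith
    linear_combination ((θ - μ - R) / 8) * h4 - (1 / 8) * hR2
  · show Psi μ θ δ ≤ dInfLinf (μ, 1 - Psi μ θ δ) (θ * (1 - k), θ * k)
    unfold dInfLinf
    apply le_csInf
    · exact ⟨_, ((1, 1), (1, 0)), by norm_num [PiLinf], rfl⟩
    · rintro r ⟨⟨⟨a, b⟩, ⟨c, d⟩⟩, hP, rfl⟩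
      simp only [PiLinf, Set.mem_setOf_eq] at hP
      obtain ⟨hmax, habs, hdot⟩ := hP
      simp only at habs hdot hmax ⊢
      by_contra hcon
      push_neg at hcon
      have h1 : |μ - a| < Psi μ θ δ :=
        ((le_max_left _ _).trans (le_max_left _ _)).trans_lt hcon
      have h2 : |1 - Psi μ θ δ - b| < Psi μ θ δ :=
        ((le_max_right _ _).trans (le_max_left _ _)).trans_lt hcon
      have h3 : |θ * (1 - k) - c| + |θ * k - d| < Psi μ θ δ :=
        (le_max_right _ _).trans_lt hcon
      have hb1 : b < 1 := by
        have := (abs_lt.mp h2).1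
        linarith
      have ha_le : |a| ≤ 1 := by rw [← hmax]; exact le_max_left _ _
      have hac' : a * c ≤ |c| := by
        calc a * c ≤ |a * c| := le_abs_self _
          _ = |a| * |c| := abs_mul _ _
          _ ≤ 1 * |c| := mul_le_mul_of_nonneg_right ha_le (abs_nonneg _)
          _ = |c| := one_mul _
      have hb_le : |b| ≤ 1 := by rw [← hmax]; exact le_max_right _ _
      have hbd' : b * d ≤ |d| := by
        calc b * d ≤ |b * d| := le_abs_self _
          _ = |b| * |d| := abs_mul _ _
          _ ≤ 1 * |d| := mul_le_mul_of_nonneg_right hb_le (abs_nonneg _)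
          _ = |d| := one_mul _
      have hac : a * c = |c| := by linarith
      have hbd : b * d = |d| := by linarith
      have hd0 : d ≤ 0 := by
        by_contra hd
        push_neg at hd
        have hb : b = 1 := by
          have hbd2 : b * d = 1 * d := by rw [hbd, abs_of_pos hd, one_mul]
          exact mul_right_cancel₀ (ne_of_gt hd) hbd2
        linarith
      rcases lt_trichotomy c 0 with hc | hc | hc
      · -- c < 0 forces a = -1, contradicting |μ - a| < Ψ ≤ 1 + μ
        have ha : a = -1 := by
          have h' : a * c = (-1) * c := by rw [hac, abs_of_neg hc]; ring
          exact mul_right_cancel₀ (ne_of_lt hc) h'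
        rw [ha] at h1
        have := le_abs_self (μ - (-1))
        linarith
      · -- c = 0 forces d = -1
        have hd : d = -1 := by
          rw [hc] at habs
          simp only [abs_zero, zero_add] at habs
          rw [abs_of_nonpos hd0] at habs
          linarith
        rw [hc, hd, sub_zero] at h3
        rw [abs_of_nonneg h1k, show θ * k - (-1) = θ * k + 1 by ring,
          abs_of_nonneg (by linarith)] at h3
        linarith
      · -- c > 0
        have hcd : c - d = 1 := by
          rw [abs_of_pos hc, abs_of_nonpos hd0] at habs; linarith
        have e1 : c - θ * (1 - k) ≤ |θ * (1 - k) - c| := by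
          rw [abs_sub_comm]; exact le_abs_self _
        have e2 : θ * k - d ≤ |θ * k - d| := le_abs_self _
        rw [hPsidef] at h3
        linarith
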